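/- Let {W_i}_{i=1}^N be a tight fusion frame for ℝ^M with bound A, i.e. Σ_{i=1}^N P_i = A·I, in which every subspace has dimension m. Then A = Nm/M, and for every j ∈ {1,…,N}, A = N − (1/m) Σ_{i≠j} d_c(W_i, W_j)²; equivalently, Σ_{i≠j} d_c(W_i,W_j)² = m·N·(M−m)/M for every j. -/

import Mathlib

/-!
Taking the trace of `∑ i, P i = A • 1` gives `N m = A M`. Multiplying the same identity by
`P j` before taking the trace gives `∑ i, tr (P i * P j) = A m`, and for orthogonal projections
of rank `m` one has `d_c(W i, W j)² = m - tr (P i * P j)`; hence `∑_{i ≠ j} d_c² = m (N - A)`.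
-/

open Matrix BigOperators

/-- The Frobenius norm of a real square matrix. -/
noncomputable def frobeniusNorm {M : ℕ} (X : Matrix (Fin M) (Fin M) ℝ) : ℝ :=
  Real.sqrt (Matrix.trace (Xᵀ * X))

/-- The chordal distance between two subspaces of `ℝ^M`, expressed in terms of their
orthogonal projection matrices: `d_c = (1/√2) ‖Q_V − Q_W‖_F`. -/
noncomputable def chordalDist {M : ℕ} (Q₁ Q₂ : Matrix (Fin M) (Fin M) ℝ) : ℝ :=
  (1 / Real.sqrt 2) * frobeniusNorm (Q₁ - Q₂)

theorem Matrix.trace_eq_finrank_range_mulVecLin {n K : Type*} [Fintype n] [DecidableEq n]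
    [Field K] {Q : Matrix n n K} (hQ : IsIdempotentElem Q) :
    Q.trace = Module.finrank K (LinearMap.range Q.mulVecLin) := by
  have hQ' : IsIdempotentElem Q.mulVecLin := by
    rw [IsIdempotentElem, Module.End.mul_eq_comp, ← Matrix.mulVecLin_mul, hQ.eq]
  rw [← LinearMap.IsIdempotentElem.isProj_range _ hQ' |>.trace, ← Matrix.toLin'_apply',
    Matrix.trace_toLin'_eq]

theorem frobeniusNorm_sq {M : ℕ} (X : Matrix (Fin M) (Fin M) ℝ) :
    frobeniusNorm X ^ 2 = (Xᵀ * X).trace :=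
  Real.sq_sqrt (by simpa using (posSemidef_conjTranspose_mul_self X).trace_nonneg)

theorem chordalDist_self {M : ℕ} (Q : Matrix (Fin M) (Fin M) ℝ) : chordalDist Q Q = 0 := by
  simp [chordalDist, frobeniusNorm]

theorem chordalDist_sq_of_isIdempotentElem {M : ℕ} {Q₁ Q₂ : Matrix (Fin M) (Fin M) ℝ}
    (hs₁ : Q₁.IsSymm) (hs₂ : Q₂.IsSymm) (he₁ : IsIdempotentElem Q₁) (he₂ : IsIdempotentElem Q₂) :
    chordalDist Q₁ Q₂ ^ 2 = (Q₁.trace + Q₂.trace) / 2 - (Q₁ * Q₂).trace := by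
  rw [chordalDist, mul_pow, frobeniusNorm_sq, transpose_sub, hs₁.eq, hs₂.eq, sub_mul, mul_sub,
    mul_sub, he₁.eq, he₂.eq, trace_sub, trace_sub, trace_sub, trace_mul_comm Q₂ Q₁, div_pow,
    Real.sq_sqrt zero_le_two]
  ring

theorem sum_erase_chordalDist_sq_of_sum_eq_smul_one {ι : Type*} [Fintype ι] [DecidableEq ι]
    {M : ℕ} {P : ι → Matrix (Fin M) (Fin M) ℝ} {A m : ℝ} (hs : ∀ i, (P i).IsSymm)
    (he : ∀ i, IsIdempotentElem (P i)) (htr : ∀ i, (P i).trace = m)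
    (htight : ∑ i, P i = A • 1) (j : ι) :
    ∑ i ∈ Finset.univ.erase j, chordalDist (P i) (P j) ^ 2 = m * (Fintype.card ι - A) := by
  rw [Finset.sum_erase _ (by rw [chordalDist_self, zero_pow two_ne_zero])]
  calc ∑ i, chordalDist (P i) (P j) ^ 2 = ∑ i, (m - (P i * P j).trace) := by
        refine Finset.sum_congr rfl fun i _ => ?_
        rw [chordalDist_sq_of_isIdempotentElem (hs i) (hs j) (he i) (he j), htr, htr]
        ring
    _ = Fintype.card ι * m - ((∑ i, P i) * P j).trace := by
        simp [Finset.sum_sub_distrib, Finset.sum_mul, trace_sum]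
    _ = m * (Fintype.card ι - A) := by
        rw [htight, smul_mul, one_mul, trace_smul, htr, smul_eq_mul]
        ring

/-- A tight fusion frame `{W i}` for `ℝ^M` with bound `A`
(`∑ᵢ Pᵢ = A • I`) consisting of `m`-dimensional subspaces satisfies `A = Nm/M` and,
for every `j`, `A = N − (1/m) ∑_{i≠j} d_c(Wᵢ, Wⱼ)²`; equivalently
`∑_{i≠j} d_c(Wᵢ, Wⱼ)² = m N (M−m)/M` for every `j`. -/
theorem tight_fusion_frame_bound_and_distance_sums {M N : ℕ} (hM : 0 < M)
    (A : ℝ) (hA : 0 < A)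
    (W : Fin N → Submodule ℝ (Fin M → ℝ))
    (P : Fin N → Matrix (Fin M) (Fin M) ℝ)
    (hP : ∀ i, (P i).IsSymm ∧ P i * P i = P i ∧
      LinearMap.range (P i).mulVecLin = W i)
    (htight : ∑ i, P i = A • (1 : Matrix (Fin M) (Fin M) ℝ))
    (m : ℕ) (hdim : ∀ i, Module.finrank ℝ (W i) = m) :
    A = (N : ℝ) * (m : ℝ) / (M : ℝ) ∧
    (∀ j, A = (N : ℝ) -
      (1 / (m : ℝ)) * ∑ i ∈ Finset.univ.erase j, chordalDist (P i) (P j) ^ 2) ∧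
    (∀ j, ∑ i ∈ Finset.univ.erase j, chordalDist (P i) (P j) ^ 2 =
      (m : ℝ) * (N : ℝ) * ((M : ℝ) - (m : ℝ)) / (M : ℝ)) := by
  have htr : ∀ i, (P i).trace = m := fun i => by
    rw [trace_eq_finrank_range_mulVecLin (hP i).2.1, (hP i).2.2, hdim i]
  have hNm : (N : ℝ) * m = A * M := by simpa [htr, trace_sum] using congrArg trace htight
  have hM' : (M : ℝ) ≠ 0 := by positivity
  have hm : (m : ℝ) ≠ 0 := by
    rintro hm
    rw [hm, mul_zero] at hNm
    exact (mul_pos hA (by positivity : (0 : ℝ) < M)).ne' hNm.symm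
  have hA_eq : A = N * m / M := by
    field_simp
    linarith
  have hsum := sum_erase_chordalDist_sq_of_sum_eq_smul_one (fun i => (hP i).1)
    (fun i => (hP i).2.1) htr htight
  simp only [Fintype.card_fin] at hsum
  refine ⟨hA_eq, fun j => ?_, fun j => ?_⟩
  · rw [hsum j]
    field_simp
    ring
  · rw [hsum j, hA_eq]
    field_simp
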